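/- Let p₁ be the increasing string (L+1)(L+2)⋯(2L), p₂ the increasing string (2L+1)⋯(4L), p₃ = 12⋯L, and let p₁^R, p₂^R denote the reverses of p₁ and p₂. Then for all permutations x, y ∈ S_L: (a) d_U(p₂^R ∘ p₁ ∘ x, p₂^R ∘ p₁ ∘ y) ≤ L − 1; (b) d_U(p₂^R ∘ p₁ ∘ x, p₂^R ∘ p₁^R ∘ p₃) ≤ 2L − 2; (c) d_U(p₂ ∘ p₁ ∘ y, p₂^R ∘ p₁^R ∘ p₃) ≥ 3L − 2; (d) d_U(p₂^R ∘ p₁ ∘ x, p₂ ∘ p₁ ∘ y) = 2L − 1 + d_U(x, y). -/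

import Mathlib

/-- Length of a longest common subsequence of two strings (lists over ℕ). -/
noncomputable def LCS (x y : List ℕ) : ℕ :=
  sSup {k | ∃ s : List ℕ, s.Sublist x ∧ s.Sublist y ∧ s.length = k}

/-- Ulam distance between permutations, via `d_U(σ,τ) = |σ| − LCS(σ,τ)`. -/
noncomputable def ulamDist (x y : List ℕ) : ℕ := x.length - LCS x y

/-- `π` is a permutation of `[n] = {1,…,n}` viewed as a string. -/
def IsPermOf (n : ℕ) (π : List ℕ) : Prop := π.Perm (List.range' 1 n)

/-!
Every block of the padded strings uses its own range of values, so a common subsequence splits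
into common subsequences of corresponding blocks and the Ulam distance is additive over blocks.
An increasing block and its reverse share at most one letter, which costs `|block| - 1`; equal
blocks cost nothing, and two permutations of `[L]` share at least the letter `1`.
-/

section LCS

variable {x y : List ℕ}

theorem bddAbove_LCS_set (x y : List ℕ) :
    BddAbove {k | ∃ s : List ℕ, s.Sublist x ∧ s.Sublist y ∧ s.length = k} :=
  ⟨x.length, fun _ ⟨_, hx, _, hl⟩ => hl ▸ hx.length_le⟩

theorem le_LCS {s : List ℕ} (hx : s.Sublist x) (hy : s.Sublist y) : s.length ≤ LCS x y :=
  le_csSup (bddAbove_LCS_set x y) ⟨s, hx, hy, rfl⟩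

theorem LCS_le {k : ℕ} (h : ∀ s : List ℕ, s.Sublist x → s.Sublist y → s.length ≤ k) :
    LCS x y ≤ k :=
  csSup_le ⟨0, [], List.nil_sublist _, List.nil_sublist _, rfl⟩ fun _ ⟨s, hx, hy, hl⟩ =>
    hl ▸ h s hx hy

theorem exists_sublist_length_eq_LCS (x y : List ℕ) :
    ∃ s : List ℕ, s.Sublist x ∧ s.Sublist y ∧ s.length = LCS x y :=
  Nat.sSup_mem (s := {k | ∃ s : List ℕ, s.Sublist x ∧ s.Sublist y ∧ s.length = k})
    ⟨0, [], List.nil_sublist _, List.nil_sublist _, rfl⟩ (bddAbove_LCS_set x y)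

theorem LCS_le_length_left (x y : List ℕ) : LCS x y ≤ x.length :=
  LCS_le fun _ hx _ => hx.length_le

theorem LCS_comm (x y : List ℕ) : LCS x y = LCS y x :=
  le_antisymm (LCS_le fun _ hx hy => le_LCS hy hx) (LCS_le fun _ hy hx => le_LCS hx hy)

theorem LCS_self (x : List ℕ) : LCS x x = x.length :=
  le_antisymm (LCS_le_length_left x x) (le_LCS (List.Sublist.refl x) (List.Sublist.refl x))

theorem one_le_LCS_of_mem {n : ℕ} (hx : n ∈ x) (hy : n ∈ y) : 1 ≤ LCS x y :=
  le_LCS (List.singleton_sublist.2 hx) (List.singleton_sublist.2 hy)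

theorem LCS_le_one_of_pairwise_lt_of_pairwise_gt (hx : x.Pairwise (· < ·))
    (hy : y.Pairwise (· > ·)) : LCS x y ≤ 1 := by
  refine LCS_le fun s hsx hsy => ?_
  rcases s with _ | ⟨a, _ | ⟨b, t⟩⟩
  · simp
  · simp
  · have hab : a < b := List.rel_of_pairwise_cons (hx.sublist hsx) List.mem_cons_self
    have hba : b < a := List.rel_of_pairwise_cons (hy.sublist hsy) List.mem_cons_self
    exact absurd hab hba.asymm

theorem LCS_add_LCS_le_LCS_append (a b a' b' : List ℕ) :
    LCS a a' + LCS b b' ≤ LCS (a ++ b) (a' ++ b') := by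
  obtain ⟨s, hsa, hsa', hs⟩ := exists_sublist_length_eq_LCS a a'
  obtain ⟨t, htb, htb', ht⟩ := exists_sublist_length_eq_LCS b b'
  rw [← hs, ← ht, ← List.length_append]
  exact le_LCS (hsa.append htb) (hsa'.append htb')

theorem LCS_append_le_of_separated (p : ℕ → Prop) [DecidablePred p] {a b a' b' : List ℕ}
    (ha : ∀ n ∈ a, p n) (ha' : ∀ n ∈ a', p n) (hb : ∀ n ∈ b, ¬p n) (hb' : ∀ n ∈ b', ¬p n) :
    LCS (a ++ b) (a' ++ b') ≤ LCS a a' + LCS b b' := by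
  have filter_eq_left {u v : List ℕ} (hu : ∀ n ∈ u, p n) (hv : ∀ n ∈ v, ¬p n) :
      (u ++ v).filter (p ·) = u := by
    simp_all [List.filter_eq_self.2, List.filter_eq_nil_iff.2]
  have filter_eq_right {u v : List ℕ} (hu : ∀ n ∈ u, p n) (hv : ∀ n ∈ v, ¬p n) :
      (u ++ v).filter (!p ·) = v := by
    simp_all [List.filter_eq_self.2, List.filter_eq_nil_iff.2]
  refine LCS_le fun s hs hs' => ?_
  rw [s.length_eq_length_filter_add (p ·)]
  gcongr
  · exact le_LCS (filter_eq_left ha hb ▸ hs.filter _) (filter_eq_left ha' hb' ▸ hs'.filter _)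
  · exact le_LCS (filter_eq_right ha hb ▸ hs.filter _) (filter_eq_right ha' hb' ▸ hs'.filter _)

end LCS

section Ulam

variable {x y : List ℕ}

theorem ulamDist_self (x : List ℕ) : ulamDist x x = 0 := by
  simp [ulamDist, LCS_self]

theorem ulamDist_append_le (a b a' b' : List ℕ) :
    ulamDist (a ++ b) (a' ++ b') ≤ ulamDist a a' + ulamDist b b' := by
  have := LCS_add_LCS_le_LCS_append a b a' b'
  have := LCS_le_length_left a a'
  have := LCS_le_length_left b b'
  simp only [ulamDist, List.length_append]
  omega

theorem ulamDist_append_of_separated (p : ℕ → Prop) [DecidablePred p] {a b a' b' : List ℕ}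
    (ha : ∀ n ∈ a, p n) (ha' : ∀ n ∈ a', p n) (hb : ∀ n ∈ b, ¬p n) (hb' : ∀ n ∈ b', ¬p n) :
    ulamDist (a ++ b) (a' ++ b') = ulamDist a a' + ulamDist b b' := by
  have := LCS_append_le_of_separated p ha ha' hb hb'
  have := LCS_add_LCS_le_LCS_append a b a' b'
  have := LCS_le_length_left a a'
  have := LCS_le_length_left b b'
  simp only [ulamDist, List.length_append]
  omega

theorem ulamDist_reverse_of_pairwise_lt (h : x.Pairwise (· < ·)) :
    ulamDist x x.reverse = x.length - 1 := by
  have hle := LCS_le_one_of_pairwise_lt_of_pairwise_gt h (List.pairwise_reverse.2 h)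
  rcases x with _ | ⟨n, t⟩
  · simp [ulamDist]
  · have : 1 ≤ LCS (n :: t) (n :: t).reverse :=
      one_le_LCS_of_mem List.mem_cons_self (List.mem_reverse.2 List.mem_cons_self)
    simp only [ulamDist]
    omega

theorem ulamDist_reverse_left_of_pairwise_lt (h : x.Pairwise (· < ·)) :
    ulamDist x.reverse x = x.length - 1 := by
  rw [← ulamDist_reverse_of_pairwise_lt h, ulamDist, ulamDist, LCS_comm, List.length_reverse]

theorem IsPermOf.mem_iff {L n : ℕ} (hx : IsPermOf L x) : n ∈ x ↔ 1 ≤ n ∧ n < 1 + L :=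
  (List.Perm.mem_iff hx).trans List.mem_range'_1

theorem ulamDist_le_of_isPermOf {L : ℕ} (hx : IsPermOf L x) (hy : IsPermOf L y) :
    ulamDist x y ≤ L - 1 := by
  rcases Nat.eq_zero_or_pos L with rfl | hL
  · simp [ulamDist, (List.perm_nil.1 hx)]
  · have := one_le_LCS_of_mem (hx.mem_iff.2 ⟨le_rfl, by omega⟩) (hy.mem_iff.2 ⟨le_rfl, by omega⟩)
    have hxL : x.length = L := by simpa using hx.length_eq
    simp only [ulamDist]
    omega

end Ulam

theorem center_padding_observations (L : ℕ)
    (p1 p2 p3 : List ℕ)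
    (hp1 : p1 = List.range' (L + 1) L) (hp2 : p2 = List.range' (2 * L + 1) (2 * L))
    (hp3 : p3 = List.range' 1 L)
    (x y : List ℕ) (hx : IsPermOf L x) (hy : IsPermOf L y) :
    ulamDist (p2.reverse ++ p1 ++ x) (p2.reverse ++ p1 ++ y) ≤ L - 1 ∧
    ulamDist (p2.reverse ++ p1 ++ x) (p2.reverse ++ p1.reverse ++ p3) ≤ 2 * L - 2 ∧
    ulamDist (p2 ++ p1 ++ y) (p2.reverse ++ p1.reverse ++ p3) ≥ 3 * L - 2 ∧
    ulamDist (p2.reverse ++ p1 ++ x) (p2 ++ p1 ++ y) = 2 * L - 1 + ulamDist x y := by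
  subst hp1 hp2 hp3
  have hp3Perm : IsPermOf L (List.range' 1 L) := List.Perm.refl _
  have hp1Inc := List.pairwise_lt_range' (s := L + 1) (n := L)
  have hp2Inc := List.pairwise_lt_range' (s := 2 * L + 1) (n := 2 * L)
  refine ⟨?_, ?_, ?_, ?_⟩
  · calc _ ≤ ulamDist _ _ + ulamDist x y := ulamDist_append_le _ _ _ _
      _ ≤ L - 1 := by rw [ulamDist_self, zero_add]; exact ulamDist_le_of_isPermOf hx hy
  · calc _ ≤ ulamDist _ _ + ulamDist _ _ + ulamDist x _ :=
          (ulamDist_append_le _ _ _ _).trans (by gcongr; exact ulamDist_append_le _ _ _ _)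
      _ ≤ 2 * L - 2 := by
        rw [ulamDist_self, ulamDist_reverse_of_pairwise_lt hp1Inc, List.length_range']
        have := ulamDist_le_of_isPermOf hx hp3Perm
        omega
  · rw [List.append_assoc, List.append_assoc, ulamDist_append_of_separated (2 * L + 1 ≤ ·),
      ulamDist_append_of_separated (L + 1 ≤ ·), ulamDist_reverse_of_pairwise_lt hp2Inc,
      ulamDist_reverse_of_pairwise_lt hp1Inc]
    · simp only [List.length_range']
      omega
    all_goals
      intro n hn
      simp only [List.mem_append, List.mem_reverse, List.mem_range'_1, hy.mem_iff] at hn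
      omega
  · rw [List.append_assoc, List.append_assoc, ulamDist_append_of_separated (2 * L + 1 ≤ ·),
      ulamDist_append_of_separated (L + 1 ≤ ·), ulamDist_reverse_left_of_pairwise_lt hp2Inc,
      ulamDist_self]
    · simp only [List.length_range', zero_add]
    all_goals
      intro n hn
      simp only [List.mem_append, List.mem_reverse, List.mem_range'_1, hx.mem_iff,
        hy.mem_iff] at hn
      omega
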